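/- Let F be the homotopy fiber of a map ρ: X → Y of simply connected spaces such that all π_n(X) are finitely generated abelian groups, all π_n(Y) are ℚ-vector spaces, and π_n(ρ) ⊗ ℚ is an isomorphism for all n. Then from the long exact sequence π_{d+1}(X) → π_{d+1}(Y) → π_d(F) → π_d(X) → π_d(Y), every π_d(F) is a torsion abelian group that is an extension of a subgroup of a finitely generated torsion group by a quotient of a ℚ-vector space by a finitely generated group; in particular π_d(F) is the direct sum of a finite abelian group and finitely many copies of ℚ/ℤ. -/

import Mathlib

/-!
Exactness identifies the kernel of `G → B` with `V / im A`. Since `A ⊗ ℚ → V ⊗ ℚ` is onto,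
`im A` is a finitely generated subgroup of `V` spanning it over `ℚ`; a `ℤ`-basis of this lattice
is a `ℚ`-basis of `V`, so `V / im A ≅ (ℚ/ℤ)^s`. This group is divisible, hence an injective
`ℤ`-module, so it splits off `G` with complement the image of `G → B`. That image lies in the
kernel of `B → W`, which is torsion because `B ⊗ ℚ → W ⊗ ℚ` is injective and `B → B ⊗ ℚ` kills
only torsion; as a subgroup of the finitely generated group `B` it is therefore finite.
-/

open TensorProduct

theorem LinearMap.span_range_eq_top_of_surjective_rTensor {R A M V : Type*} [CommSemiring R]
    [CommSemiring A] [Algebra R A] [AddCommMonoid M] [Module R M] [AddCommMonoid V] [Module R V]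
    [Module A V] [IsScalarTower R A V] (f : M →ₗ[R] V)
    (hf : Function.Surjective (f.rTensor A)) :
    Submodule.span A (Set.range f) = ⊤ := by
  have hl : Function.Surjective (f.lTensor A) := by
    rw [← comm_comp_rTensor_comp_comm_eq]
    exact (TensorProduct.comm R V A).surjective.comp
      (hf.comp (TensorProduct.comm R A M).surjective)
  have hμ : Function.Surjective (LinearMap.id.liftBaseChange A : A ⊗[R] V →ₗ[A] V) :=
    fun v => ⟨1 ⊗ₜ v, by simp⟩
  have hcomp : (f.liftBaseChange A).restrictScalars R =
      (LinearMap.id.liftBaseChange A).restrictScalars R ∘ₗ f.lTensor A := by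
    ext; simp
  rw [← LinearMap.coe_range, ← LinearMap.range_liftBaseChange, LinearMap.range_eq_top,
    ← LinearMap.coe_restrictScalars R, hcomp]
  exact hμ.comp hl

/-- `m ↦ 1 ⊗ m` is the localization `M → S⁻¹M`, whose kernel is the `S`-torsion. -/
theorem LinearMap.exists_smul_eq_zero_of_injective_rTensor {R A M N : Type*} [CommRing R]
    (S : Submonoid R) [CommRing A] [Algebra R A] [IsLocalization S A] [AddCommGroup M]
    [Module R M] [AddCommGroup N] [Module R N] (f : M →ₗ[R] N)
    (hf : Function.Injective (f.rTensor A)) {m : M} (hm : f m = 0) : ∃ s : S, s • m = 0 := by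
  rw [← IsLocalizedModule.eq_zero_iff S (TensorProduct.mk R A M 1)]
  apply (LinearMap.lTensor_inj_iff_rTensor_inj A f).mpr hf
  simp [hm]

theorem AddMonoidHom.isOfFinAddOrder_of_injective_rTensor {B W : Type*} [AddCommGroup B]
    [AddCommGroup W] (f : B →+ W) (hf : Function.Injective (f.toIntLinearMap.rTensor ℚ))
    {b : B} (hb : b ∈ f.ker) : IsOfFinAddOrder b := by
  obtain ⟨⟨n, hn⟩, hnb⟩ :=
    f.toIntLinearMap.exists_smul_eq_zero_of_injective_rTensor (nonZeroDivisors ℤ) hf hb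
  exact isOfFinAddOrder_iff_zsmul_eq_zero.mpr ⟨n, nonZeroDivisors.ne_zero hn, hnb⟩

theorem AddSubgroup.finite_of_forall_isOfFinAddOrder {B : Type*} [AddCommGroup B]
    [AddGroup.FG B] (H : AddSubgroup B) (hH : ∀ x ∈ H, IsOfFinAddOrder x) : Finite H := by
  have : Module.Finite ℤ B := Module.Finite.iff_addGroup_fg.mpr ‹_›
  have : AddGroup.FG H :=
    Module.Finite.iff_addGroup_fg.mp (inferInstanceAs (Module.Finite ℤ H.toIntSubmodule))
  exact AddCommGroup.finite_of_fg_isAddTorsion H fun x =>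
    AddSubmonoid.isOfFinAddOrder_coe.mp (hH x x.2)

theorem Submodule.exists_basis_span_eq_of_span_eq_top {R K V : Type*} [CommRing R] [IsDomain R]
    [IsPrincipalIdealRing R] [Field K] [Algebra R K] [IsFractionRing R K] [AddCommGroup V]
    [Module R V] [Module K V] [IsScalarTower R K V] (L : Submodule R V) [Module.Finite R L]
    (hL : Submodule.span K (L : Set V) = ⊤) :
    ∃ (s : ℕ) (b : Module.Basis (Fin s) K V), Submodule.span R (Set.range b) = L := by
  have : Module.IsTorsionFree R V := Module.IsTorsionFree.trans K
  obtain ⟨s, bL⟩ := Module.basisOfFiniteTypeTorsionFree' (R := R) (M := L)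
  have hspanR : Submodule.span R (Set.range (L.subtype ∘ bL)) = L := by
    rw [Set.range_comp, ← Submodule.map_span, bL.span_eq, Submodule.map_subtype_top]
  have hli : LinearIndependent K (L.subtype ∘ bL) :=
    (bL.linearIndependent.map' L.subtype L.ker_subtype).localization K (nonZeroDivisors R)
  refine ⟨s, Module.Basis.mk hli ?_, by rwa [Module.Basis.coe_mk]⟩
  calc ⊤ = Submodule.span K (L : Set V) := hL.symm
    _ ≤ _ := by
      conv_lhs => rw [← hspanR]
      exact Submodule.span_le.mpr (Submodule.span_subset_span R K _)

theorem Module.Basis.nonempty_quotient_span_int_addEquiv {ι V : Type*} [Finite ι]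
    [AddCommGroup V] [Module ℚ V] (b : Module.Basis ι ℚ V) :
    Nonempty (V ⧸ (Submodule.span ℤ (Set.range b)).toAddSubgroup ≃+ (ι → AddCircle (1 : ℚ))) := by
  let Ψ : V →+ (ι → AddCircle (1 : ℚ)) :=
    AddMonoidHom.pi fun i => (QuotientAddGroup.mk' _).comp (b.coord i).toAddMonoidHom
  have hΨ (v : V) (i : ι) : Ψ v i = (b.repr v i : AddCircle (1 : ℚ)) := rfl
  have hsurj : Function.Surjective Ψ := by
    intro h
    choose q hq using fun i => QuotientAddGroup.mk_surjective (h i)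
    refine ⟨b.repr.symm (Finsupp.equivFunOnFinite.symm q), funext fun i => ?_⟩
    simp [hΨ, hq]
  have hker : Ψ.ker = (Submodule.span ℤ (Set.range b)).toAddSubgroup := by
    ext v
    simp [hΨ, b.mem_span_iff_repr_mem ℤ, funext_iff, AddSubgroup.mem_zmultiples_iff]
  exact ⟨(QuotientAddGroup.quotientAddEquivOfEq hker.symm).trans
    (QuotientAddGroup.quotientKerEquivOfSurjective Ψ hsurj)⟩

theorem AddSubgroup.exists_quotient_addEquiv_pi_addCircle {V : Type*} [AddCommGroup V]
    [Module ℚ V] (L : AddSubgroup V) [AddGroup.FG L]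
    (hL : Submodule.span ℚ (L : Set V) = ⊤) :
    ∃ s : ℕ, Nonempty (V ⧸ L ≃+ (Fin s → AddCircle (1 : ℚ))) := by
  have : Module.Finite ℤ L.toIntSubmodule := Module.Finite.iff_addGroup_fg.mpr ‹_›
  obtain ⟨s, b, hb⟩ := L.toIntSubmodule.exists_basis_span_eq_of_span_eq_top (K := ℚ) hL
  obtain ⟨e⟩ := b.nonempty_quotient_span_int_addEquiv
  exact ⟨s, ⟨(QuotientAddGroup.quotientAddEquivOfEq (by rw [hb]; rfl)).trans e⟩⟩

noncomputable def Function.Exact.kerAddEquivQuotientRange {A B C D : Type*} [AddCommGroup A]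
    [AddCommGroup B] [AddCommGroup C] [AddCommGroup D] {f : A →+ B} {g : B →+ C} {h : C →+ D}
    (hfg : Function.Exact f g) (hgh : Function.Exact g h) : h.ker ≃+ B ⧸ f.range :=
  (AddEquiv.addSubgroupCongr hgh.addMonoidHom_ker_eq).trans <|
    (QuotientAddGroup.quotientKerEquivRange g).symm.trans
      (QuotientAddGroup.quotientAddEquivOfEq hfg.addMonoidHom_ker_eq)

theorem AddMonoidHom.nonempty_addEquiv_range_prod_of_ker {G B D : Type*} [AddCommGroup G]
    [AddCommGroup B] [AddCommGroup D] [DivisibleBy D ℤ] (f : G →+ B) (e : f.ker ≃+ D) :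
    Nonempty (G ≃+ f.range × D) := by
  obtain ⟨r, hr⟩ := (Module.Baer.of_divisible D).extension_property_addMonoidHom
    f.ker.subtype f.ker.subtype_injective e.toAddMonoidHom
  let i : D →ₗ[ℤ] G := (f.ker.subtype.comp e.symm.toAddMonoidHom).toIntLinearMap
  have hexact : Function.Exact i f.rangeRestrict.toIntLinearMap := fun y => by
    simp [i, Subtype.ext_iff]
  have hretract : r.toIntLinearMap ∘ₗ i = LinearMap.id := by
    ext d
    simpa [i] using DFunLike.congr_fun hr (e.symm d)
  exact ⟨((hexact.splitInjectiveEquiv f.rangeRestrict_surjective ⟨_, hretract⟩).1.toAddEquiv).trans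
    AddEquiv.prodComm⟩

theorem fiber_homotopy_group_structure_general
    (A V G B W : Type) [AddCommGroup A] [AddCommGroup V] [AddCommGroup G]
    [AddCommGroup B] [AddCommGroup W] [AddGroup.FG A] [AddGroup.FG B]
    [Module ℚ V]
    (f₁ : A →+ V) (f₂ : V →+ G) (f₃ : G →+ B) (f₄ : B →+ W)
    (e₁ : Function.Exact f₁ f₂) (e₂ : Function.Exact f₂ f₃) (e₃ : Function.Exact f₃ f₄)
    (h₁ : Function.Bijective (LinearMap.rTensor ℚ f₁.toIntLinearMap :
      TensorProduct ℤ A ℚ →ₗ[ℤ] TensorProduct ℤ V ℚ))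
    (h₄ : Function.Bijective (LinearMap.rTensor ℚ f₄.toIntLinearMap :
      TensorProduct ℤ B ℚ →ₗ[ℤ] TensorProduct ℤ W ℚ)) :
    ∃ (F : Type) (_ : AddCommGroup F) (_ : Finite F) (s : ℕ),
      Nonempty (G ≃+ F × (Fin s → AddCircle (1 : ℚ))) := by
  have hspan : Submodule.span ℚ (f₁.range : Set V) = ⊤ := by
    simpa using f₁.toIntLinearMap.span_range_eq_top_of_surjective_rTensor h₁.surjective
  obtain ⟨s, ⟨eV⟩⟩ := f₁.range.exists_quotient_addEquiv_pi_addCircle hspan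
  have hfin : Finite f₃.range := f₃.range.finite_of_forall_isOfFinAddOrder fun _ hb =>
    f₄.isOfFinAddOrder_of_injective_rTensor h₄.injective (e₃.addMonoidHom_ker_eq ▸ hb)
  obtain ⟨eG⟩ :=
    f₃.nonempty_addEquiv_range_prod_of_ker ((e₁.kerAddEquivQuotientRange e₂).trans eV)
  exact ⟨f₃.range, inferInstance, hfin, s, ⟨eG⟩⟩

/-- Abelian-group version of the homotopy-fiber computation: given an exact
sequence A → V → G → B → W with A, B finitely generated, V, W ℚ-vector spaces,
and A → V, B → W rational isomorphisms, the group G is the direct sum of a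
finite group and finitely many copies of ℚ/ℤ. -/
theorem fiber_homotopy_group_structure
    (A V G B W : Type) [AddCommGroup A] [AddCommGroup V] [AddCommGroup G]
    [AddCommGroup B] [AddCommGroup W] [AddGroup.FG A] [AddGroup.FG B]
    [Module ℚ V] [Module ℚ W]
    (f₁ : A →+ V) (f₂ : V →+ G) (f₃ : G →+ B) (f₄ : B →+ W)
    (e₁ : Function.Exact f₁ f₂) (e₂ : Function.Exact f₂ f₃) (e₃ : Function.Exact f₃ f₄)
    (h₁ : Function.Bijective (LinearMap.rTensor ℚ f₁.toIntLinearMap :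
      TensorProduct ℤ A ℚ →ₗ[ℤ] TensorProduct ℤ V ℚ))
    (h₄ : Function.Bijective (LinearMap.rTensor ℚ f₄.toIntLinearMap :
      TensorProduct ℤ B ℚ →ₗ[ℤ] TensorProduct ℤ W ℚ)) :
    ∃ (F : Type) (_ : AddCommGroup F) (_ : Finite F) (s : ℕ),
      Nonempty (G ≃+ F × (Fin s → AddCircle (1 : ℚ))) :=
  fiber_homotopy_group_structure_general A V G B W f₁ f₂ f₃ f₄ e₁ e₂ e₃ h₁ h₄
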